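/- arXiv:2312.06390 — 2 statements merged into one kernel-verified Lean document; each statement's English description precedes it below -/
import Mathlib

section
/- Fix p > 1. The relation ≫ is transitive on the open square: if (N,D), (M,P), (Q,R) lie in (−1,1)×(−1,1) with (N,D) ≫ (M,P) and (M,P) ≫ (Q,R), then (N,D) ≫ (Q,R). (Part of Proposition 2.3.) -/
open MeasureTheory

/-- The geometrically regular weight sequence `α_n(N,D) = √((pⁿ+N)/(pⁿ+D))`. -/
noncomputable def grws (p N D : ℝ) (n : ℕ) : ℝ :=
  Real.sqrt ((p ^ n + N) / (p ^ n + D))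

/-- Moments of a weight sequence: `γ_0 = 1`, `γ_n = ∏_{j<n} w_j²`. -/
noncomputable def moments (w : ℕ → ℝ) (n : ℕ) : ℝ :=
  ∏ j ∈ Finset.range n, (w j) ^ 2

/-- A bounded sequence of positive reals is a subnormal weight sequence if its
moment sequence is represented by a compactly supported Berger measure on `[0,∞)`. -/
def IsSubnormalWeight (w : ℕ → ℝ) : Prop :=
  (∀ n, 0 < w n) ∧ (∃ C : ℝ, ∀ n, w n ≤ C) ∧
  ∃ μ : Measure ℝ, IsFiniteMeasure μ ∧
    (∃ K : Set ℝ, IsCompact K ∧ K ⊆ Set.Ici (0 : ℝ) ∧ μ Kᶜ = 0) ∧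
    ∀ n : ℕ, moments w n = ∫ x, x ^ n ∂μ

/-- Moment infinitely divisible weight sequence: every positive real power is subnormal. -/
def IsMIDWeight (w : ℕ → ℝ) : Prop :=
  ∀ s : ℝ, 0 < s → IsSubnormalWeight (fun n => (w n) ^ s)

/-- `(N,D) ≫_s (M,P)`: the quotient weight is subnormal. -/
def SubnormalSubord (p N D M P : ℝ) : Prop :=
  IsSubnormalWeight (fun n => grws p N D n / grws p M P n)

/-- `(N,D) ≫ (M,P)`: the quotient weight is MID. -/
def MIDSubord (p N D M P : ℝ) : Prop :=
  IsMIDWeight (fun n => grws p N D n / grws p M P n)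

lemma grws_pos {p N D : ℝ} (hp : 1 < p) (hN : -1 < N) (hD : -1 < D) (n : ℕ) :
    0 < grws p N D n := by
  have h1p : (1:ℝ) ≤ p ^ n := one_le_pow₀ hp.le
  exact Real.sqrt_pos.mpr (div_pos (by linarith) (by linarith))

lemma subnormal_mul {u v : ℕ → ℝ} (hu : IsSubnormalWeight u) (hv : IsSubnormalWeight v) :
    IsSubnormalWeight (fun n => u n * v n) := by
  obtain ⟨hu0, ⟨C₁, hC₁⟩, μ, hμfin, ⟨K₁, hK₁c, hK₁s, hK₁0⟩, hμm⟩ := hu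
  obtain ⟨hv0, ⟨C₂, hC₂⟩, ν, hνfin, ⟨K₂, hK₂c, hK₂s, hK₂0⟩, hνm⟩ := hv
  haveI := hμfin; haveI := hνfin
  refine ⟨fun n => mul_pos (hu0 n) (hv0 n),
    ⟨C₁ * C₂, fun n => mul_le_mul (hC₁ n) (hC₂ n) (hv0 n).le
      ((hu0 0).le.trans (hC₁ 0))⟩, ?_⟩
  set f : ℝ × ℝ → ℝ := fun q => q.1 * q.2 with hfdef
  have hf : Measurable f := measurable_fst.mul measurable_snd
  have hKc : IsCompact (f '' (K₁ ×ˢ K₂)) :=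
    (hK₁c.prod hK₂c).image (continuous_fst.mul continuous_snd)
  refine ⟨Measure.map f (μ.prod ν), by infer_instance, ⟨f '' (K₁ ×ˢ K₂), hKc, ?_, ?_⟩, ?_⟩
  · rintro x ⟨⟨a, b⟩, ⟨ha, hb⟩, rfl⟩
    exact Set.mem_Ici.mpr (mul_nonneg (Set.mem_Ici.mp (hK₁s ha)) (Set.mem_Ici.mp (hK₂s hb)))
  · rw [Measure.map_apply hf hKc.isClosed.measurableSet.compl]
    have hsub : f ⁻¹' (f '' (K₁ ×ˢ K₂))ᶜ ⊆ (K₁ᶜ ×ˢ Set.univ) ∪ (Set.univ ×ˢ K₂ᶜ) := by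
      rintro ⟨a, b⟩ hab
      by_cases ha : a ∈ K₁
      · by_cases hb : b ∈ K₂
        · exact absurd (Set.mem_image_of_mem f (Set.mk_mem_prod ha hb)) hab
        · exact Or.inr ⟨trivial, hb⟩
      · exact Or.inl ⟨ha, trivial⟩
    refine le_antisymm (le_trans (measure_mono hsub) ?_) zero_le
    refine le_trans (measure_union_le _ _) ?_
    rw [Measure.prod_prod, Measure.prod_prod, hK₁0, hK₂0, zero_mul, mul_zero, add_zero]
  · intro n
    have hm : moments (fun n => u n * v n) n = moments u n * moments v n := by
      simp [moments, mul_pow, Finset.prod_mul_distrib]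
    rw [hm, hμm n, hνm n]
    rw [integral_map hf.aemeasurable ((continuous_pow n).aestronglyMeasurable)]
    have : ∀ z : ℝ × ℝ, f z ^ n = z.1 ^ n * z.2 ^ n := fun z => mul_pow _ _ _
    simp only [this]
    exact (integral_prod_mul (fun x : ℝ => x ^ n) (fun y : ℝ => y ^ n)).symm

/-- the relation `≫` is transitive on the open square. -/
theorem midSubord_trans (p N D M P Q R : ℝ) (hp : 1 < p)
    (hN : -1 < N) (hN' : N < 1) (hD : -1 < D) (hD' : D < 1)
    (hM : -1 < M) (hM' : M < 1) (hP : -1 < P) (hP' : P < 1)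
    (hQ : -1 < Q) (hQ' : Q < 1) (hR : -1 < R) (hR' : R < 1)
    (h1 : MIDSubord p N D M P) (h2 : MIDSubord p M P Q R) :
    MIDSubord p N D Q R := by
  intro s hs
  have ha := grws_pos hp hN hD
  have hb := grws_pos hp hM hP
  have hc := grws_pos hp hQ hR
  have h := subnormal_mul (h1 s hs) (h2 s hs)
  have heq : (fun n => (grws p N D n / grws p Q R n) ^ s)
      = fun n => (grws p N D n / grws p M P n) ^ s * (grws p M P n / grws p Q R n) ^ s := by
    funext n
    rw [← Real.mul_rpow (div_nonneg (ha n).le (hb n).le) (div_nonneg (hb n).le (hc n).le)]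
    congr 1
    rw [div_mul_div_comm]
    rw [mul_comm (grws p M P n)]
    exact (mul_div_mul_right _ _ (hb n).ne').symm
  show IsSubnormalWeight fun n => (grws p N D n / grws p Q R n) ^ s
  rw [heq]
  exact h
end

section
/- (Theorem 3.1(3b), SW-NE shadow.) Fix p > 1 and let (N,D), (M,P) lie in the open square (−1,1)×(−1,1). If (N,D) ≫ (M,P), M ≤ 0, P ≤ 0 and P ≥ M, then (N,D) ≫ (−M,−P). -/
open MeasureTheory

open scoped ENNReal

lemma tsum_pi_fin_prod (f : ℕ → ℝ≥0∞) :
    ∀ m : ℕ, ∑' v : Fin m → ℕ, ∏ i, f (v i) = (∑' k, f k) ^ m := by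
  intro m
  induction m with
  | zero =>
    rw [pow_zero, tsum_eq_single (default : Fin 0 → ℕ)
      (fun b hb => absurd (Subsingleton.elim b default) hb)]
    simp
  | succ m ih =>
    rw [pow_succ, ← ih, ← (Fin.consEquiv (fun _ : Fin (m + 1) => ℕ)).tsum_eq
      (fun v : Fin (m + 1) → ℕ => ∏ i, f (v i))]
    have hc : ∀ c : ℕ × (Fin m → ℕ),
        ∏ i, f ((Fin.consEquiv (fun _ : Fin (m + 1) => ℕ)) c i) = f c.1 * ∏ i, f (c.2 i) := by
      rintro ⟨x, v⟩
      simp [Fin.consEquiv]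
      rw [Fin.prod_univ_succ]
      simp
    rw [tsum_congr hc, ENNReal.tsum_prod']
    simp_rw [ENNReal.tsum_mul_left]
    rw [ENNReal.tsum_mul_right]
    ring

lemma geom_aux {x d e : ℝ} (hx : x ≠ 1) (hd : d = e / (1 - x)) (n : ℕ) :
    e * ((x ^ n - 1) / (x - 1)) = d * x ^ 0 - d * x ^ n := by
  have h1 : x - 1 ≠ 0 := sub_ne_zero.mpr hx
  have h2 : (1 : ℝ) - x ≠ 0 := fun h => hx (by
    have := sub_eq_zero.mp h; linarith)
  subst hd
  field_simp
  ring

set_option maxHeartbeats 1000000 in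
lemma grws_quot_MID (p M P : ℝ) (hp : 1 < p) (hM : -1 < M) (hP : -1 < P) (hM0 : M ≤ 0)
    (hP0 : P ≤ 0) (hMP : M ≤ P) :
    IsMIDWeight (fun n => grws p M P n / grws p (-M) (-P) n) := by
  have hp0 : (0 : ℝ) < p := lt_trans one_pos hp
  set q : ℝ := p⁻¹ with hqdef
  have hq0 : 0 < q := inv_pos.mpr hp0
  have hq1 : q < 1 := inv_lt_one_of_one_lt₀ hp
  set a : ℝ := -M with hadef
  set b : ℝ := -P with hbdef
  have hb0 : 0 ≤ b := neg_nonneg.mpr hP0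
  have hba : b ≤ a := neg_le_neg hMP
  have ha0 : 0 ≤ a := le_trans hb0 hba
  have ha1 : a < 1 := by simp only [hadef]; linarith
  have hpow : ∀ n : ℕ, (1 : ℝ) ≤ p ^ n := fun n => one_le_pow₀ hp.le
  have hqp : ∀ n : ℕ, q ^ n * p ^ n = 1 := fun n => by
    rw [hqdef, ← mul_pow, inv_mul_cancel₀ (ne_of_gt hp0), one_pow]
  have hqpow_pos : ∀ n : ℕ, 0 < q ^ n := fun n => pow_pos hq0 n
  have hqpow_le_one : ∀ n : ℕ, q ^ n ≤ 1 := fun n => pow_le_one₀ hq0.le hq1.le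
  have hA : ∀ n : ℕ, 0 < p ^ n + M := fun n => by nlinarith [hpow n]
  have hB : ∀ n : ℕ, 0 < p ^ n + P := fun n => by nlinarith [hpow n]
  have hC : ∀ n : ℕ, 0 < p ^ n - M := fun n => by nlinarith [hpow n]
  have hD : ∀ n : ℕ, 0 < p ^ n - P := fun n => by nlinarith [hpow n]
  set G : ℕ → ℝ := fun n => ((p ^ n + M) * (p ^ n - P)) / ((p ^ n + P) * (p ^ n - M))
    with hGdef
  have hG0 : ∀ n, 0 < G n := fun n => div_pos (mul_pos (hA n) (hD n)) (mul_pos (hB n) (hC n))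
  have hG1 : ∀ n, G n ≤ 1 := fun n => by
    rw [hGdef, div_le_one (mul_pos (hB n) (hC n))]
    nlinarith [pow_pos hp0 n]
  have hw_eq : (fun n => grws p M P n / grws p (-M) (-P) n) = fun n => Real.sqrt (G n) := by
    funext n
    rw [grws, grws, ← Real.sqrt_div (le_of_lt (div_pos (hA n) (hB n)))]
    congr 1
    rw [hGdef]
    have h1 := ne_of_gt (hB n); have h2 := ne_of_gt (hC n); have h3 := ne_of_gt (hD n)
    rw [div_div_div_eq]
    ring
  rw [hw_eq]
  intro s hs
  -- the coefficients
  set c : ℕ → ℝ := fun k => 2 * s * (a ^ (2 * k + 1) - b ^ (2 * k + 1)) / (2 * (k : ℝ) + 1)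
    with hcdef
  set ρ : ℕ → ℝ := fun k => q ^ (2 * k + 1) with hρdef
  have hρ0 : ∀ k, 0 < ρ k := fun k => pow_pos hq0 _
  have hρ1 : ∀ k, ρ k < 1 := fun k => pow_lt_one₀ hq0.le hq1 (by omega)
  have hc0 : ∀ k, 0 ≤ c k := fun k => by
    have := pow_le_pow_left₀ hb0 hba (2 * k + 1)
    have h2 : (0 : ℝ) < 2 * (k : ℝ) + 1 := by positivity
    apply div_nonneg _ h2.le
    nlinarith
  set Dc : ℕ → ℝ := fun k => c k / (1 - ρ k) with hDcdef
  have hDc0 : ∀ k, 0 ≤ Dc k := fun k => div_nonneg (hc0 k) (by linarith [hρ1 k])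
  -- key HasSum for each j
  have hkey : ∀ j : ℕ, HasSum (fun k => c k * ρ k ^ j) (-(s * Real.log (G j))) := by
    intro j
    have hxa : 0 ≤ a * q ^ j := mul_nonneg ha0 (hqpow_pos j).le
    have hxa1 : a * q ^ j < 1 := lt_of_le_of_lt
      (mul_le_of_le_one_right ha0 (hqpow_le_one j)) ha1
    have hyb : 0 ≤ b * q ^ j := mul_nonneg hb0 (hqpow_pos j).le
    have hyb1 : b * q ^ j < 1 := lt_of_le_of_lt
      (le_trans (mul_le_mul_of_nonneg_right hba (hqpow_pos j).le)
        (mul_le_of_le_one_right ha0 (hqpow_le_one j))) ha1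
    have h1 := Real.hasSum_log_sub_log_of_abs_lt_one
      (x := a * q ^ j) (by rw [abs_of_nonneg hxa]; exact hxa1)
    have h2 := Real.hasSum_log_sub_log_of_abs_lt_one
      (x := b * q ^ j) (by rw [abs_of_nonneg hyb]; exact hyb1)
    have h3 := (h1.sub h2).mul_left s
    have hGj : G j = ((1 - a * q ^ j) * (1 + b * q ^ j)) /
        ((1 + a * q ^ j) * (1 - b * q ^ j)) := by
      have e1 : 1 - a * q ^ j = q ^ j * (p ^ j + M) := by
        simp only [hadef]; linear_combination -(hqp j)
      have e2 : 1 + b * q ^ j = q ^ j * (p ^ j - P) := by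
        simp only [hbdef]; linear_combination -(hqp j)
      have e3 : 1 + a * q ^ j = q ^ j * (p ^ j - M) := by
        simp only [hadef]; linear_combination -(hqp j)
      have e4 : 1 - b * q ^ j = q ^ j * (p ^ j + P) := by
        simp only [hbdef]; linear_combination -(hqp j)
      rw [e1, e2, e3, e4, mul_mul_mul_comm,
        mul_mul_mul_comm (q ^ j) (p ^ j - M) (q ^ j) (p ^ j + P),
        mul_div_mul_left _ _ (ne_of_gt (mul_pos (hqpow_pos j) (hqpow_pos j))), hGdef]
      show (p ^ j + M) * (p ^ j - P) / ((p ^ j + P) * (p ^ j - M)) = _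
      rw [mul_comm (p ^ j + P) (p ^ j - M)]
    have hlogG : Real.log (G j) =
        (Real.log (1 - a * q ^ j) + Real.log (1 + b * q ^ j)) -
        (Real.log (1 + a * q ^ j) + Real.log (1 - b * q ^ j)) := by
      have n1 : (1 : ℝ) - a * q ^ j ≠ 0 := by nlinarith
      have n2 : (1 : ℝ) + b * q ^ j ≠ 0 := by nlinarith
      have n3 : (1 : ℝ) + a * q ^ j ≠ 0 := by nlinarith
      have n4 : (1 : ℝ) - b * q ^ j ≠ 0 := by nlinarith
      rw [hGj, Real.log_div (mul_ne_zero n1 n2) (mul_ne_zero n3 n4),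
        Real.log_mul n1 n2, Real.log_mul n3 n4]
    convert h3 using 1
    · rfl
    · funext k
      have hppow : (q ^ j) ^ (2 * k + 1) = ρ k ^ j := by
        rw [hρdef, ← pow_mul, mul_comm j (2 * k + 1), pow_mul]
      rw [hcdef, mul_pow a (q ^ j), mul_pow b (q ^ j), hppow]
      ring
    · rw [hlogG]; ring
  -- summability
  have ha2 : a ^ 2 < 1 := pow_lt_one₀ ha0 ha1 (by omega)
  have hDcle : ∀ k, Dc k ≤ 2 * s * a / (1 - q) * (a ^ 2) ^ k := by
    intro k
    have hρq : ρ k ≤ q := by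
      rw [hρdef]
      calc q ^ (2 * k + 1) ≤ q ^ 1 := pow_le_pow_of_le_one hq0.le hq1.le (by omega)
        _ = q := pow_one q
    have h1q : 0 < 1 - q := by linarith
    have h1ρ : 0 < 1 - ρ k := by linarith [hρ1 k]
    have hcle : c k ≤ 2 * s * a ^ (2 * k + 1) := by
      rw [hcdef]
      have hb : 0 ≤ b ^ (2 * k + 1) := pow_nonneg hb0 _
      have h2 : (1 : ℝ) ≤ 2 * (k : ℝ) + 1 := by
        have := Nat.cast_nonneg (α := ℝ) k; linarith
      have hX : 0 ≤ 2 * s * (a ^ (2 * k + 1) - b ^ (2 * k + 1)) := by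
        have := pow_le_pow_left₀ hb0 hba (2 * k + 1)
        nlinarith
      calc 2 * s * (a ^ (2 * k + 1) - b ^ (2 * k + 1)) / (2 * (k : ℝ) + 1)
          ≤ 2 * s * (a ^ (2 * k + 1) - b ^ (2 * k + 1)) := div_le_self hX h2
        _ ≤ 2 * s * a ^ (2 * k + 1) := by nlinarith
    have hae : a ^ (2 * k + 1) = a * (a ^ 2) ^ k := by
      rw [← pow_mul]; ring
    calc Dc k = c k / (1 - ρ k) := by rw [hDcdef]
      _ ≤ 2 * s * a ^ (2 * k + 1) / (1 - q) := by
          apply div_le_div₀ (by positivity) hcle h1q (by linarith)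
      _ = 2 * s * a / (1 - q) * (a ^ 2) ^ k := by rw [hae]; ring
  have hDsummable : Summable Dc := by
    apply Summable.of_nonneg_of_le hDc0 hDcle
    exact (summable_geometric_of_lt_one (by positivity) ha2).mul_left _
  have hsum_n : ∀ n : ℕ, Summable (fun k => Dc k * ρ k ^ n) := by
    intro n
    apply Summable.of_nonneg_of_le
      (fun k => mul_nonneg (hDc0 k) (pow_nonneg (hρ0 k).le n))
      (fun k => mul_le_of_le_one_right (hDc0 k) (pow_le_one₀ (hρ0 k).le (hρ1 k).le))
      hDsummable
  set Hh : ℕ → ℝ := fun n => ∑' k, Dc k * ρ k ^ n with hHhdef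
  have hHh0 : ∀ n, 0 ≤ Hh n := fun n => tsum_nonneg
    (fun k => mul_nonneg (hDc0 k) (pow_nonneg (hρ0 k).le n))
  have hHsum : ∀ n, HasSum (fun k => Dc k * ρ k ^ n) (Hh n) := fun n => (hsum_n n).hasSum
  have hlogsum : ∀ n : ℕ, ∑ j ∈ Finset.range n, (-(s * Real.log (G j))) = Hh 0 - Hh n := by
    intro n
    have h1 : HasSum (fun k => ∑ j ∈ Finset.range n, c k * ρ k ^ j)
        (∑ j ∈ Finset.range n, -(s * Real.log (G j))) :=
      hasSum_sum (fun j _ => hkey j)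
    have h2 : (fun k => ∑ j ∈ Finset.range n, c k * ρ k ^ j) =
        fun k => Dc k * ρ k ^ 0 - Dc k * ρ k ^ n := by
      funext k
      have hne1 : ρ k ≠ 1 := ne_of_lt (hρ1 k)
      rw [← Finset.mul_sum, geom_sum_eq hne1]
      exact geom_aux hne1 (by rw [hDcdef]) n
    rw [h2] at h1
    exact h1.unique ((hHsum 0).sub (hHsum n))
  -- moments formula
  have hγ : ∀ n, moments (fun k => Real.sqrt (G k) ^ s) n = Real.exp (Hh n - Hh 0) := by
    intro n
    have h1 : moments (fun k => Real.sqrt (G k) ^ s) n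
        = ∏ j ∈ Finset.range n, (G j) ^ s := by
      unfold moments
      refine Finset.prod_congr rfl fun j _ => ?_
      rw [← Real.rpow_natCast (Real.sqrt (G j) ^ s) 2,
        ← Real.rpow_mul (Real.sqrt_nonneg _), Real.sqrt_eq_rpow,
        ← Real.rpow_mul (hG0 j).le]
      congr 1
      ring
    have hprodpos : 0 < ∏ j ∈ Finset.range n, (G j) ^ s :=
      Finset.prod_pos fun j _ => Real.rpow_pos_of_pos (hG0 j) s
    have h2 : Real.log (∏ j ∈ Finset.range n, (G j) ^ s) = Hh n - Hh 0 := by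
      rw [Real.log_prod (fun j _ => ne_of_gt (Real.rpow_pos_of_pos (hG0 j) s))]
      have h3 : ∀ j ∈ Finset.range n, Real.log ((G j) ^ s) = s * Real.log (G j) :=
        fun j _ => Real.log_rpow (hG0 j) s
      rw [Finset.sum_congr rfl h3]
      have h4 := hlogsum n
      rw [Finset.sum_neg_distrib] at h4
      linarith
    rw [h1, ← Real.exp_log hprodpos, h2]
  -- the Berger measure: compound-Poisson type atomic measure
  set atom : (Σ m : ℕ, (Fin m → ℕ)) → ℝ := fun σ => ∏ i, ρ (σ.2 i) with hatomdef
  set wgt : (Σ m : ℕ, (Fin m → ℕ)) → ℝ≥0∞ :=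
    fun σ => ENNReal.ofReal ((∏ i, Dc (σ.2 i)) * ((Nat.factorial σ.1 : ℝ))⁻¹) with hwgtdef
  set μ : Measure ℝ := Measure.sum (fun σ : Σ m : ℕ, (Fin m → ℕ) =>
    (ENNReal.ofReal (Real.exp (-(Hh 0))) * wgt σ) • Measure.dirac (atom σ)) with hμdef
  have hatom_pos : ∀ σ : Σ m : ℕ, (Fin m → ℕ), 0 < atom σ :=
    fun σ => Finset.prod_pos (fun i _ => hρ0 _)
  have hatom_le : ∀ σ : Σ m : ℕ, (Fin m → ℕ), atom σ ≤ 1 :=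
    fun σ => Finset.prod_le_one (fun i _ => (hρ0 _).le) (fun i _ => (hρ1 _).le)
  have hterm : ∀ (n : ℕ) (σ : Σ m : ℕ, (Fin m → ℕ)),
      wgt σ * ENNReal.ofReal (atom σ ^ n)
      = ENNReal.ofReal ((Nat.factorial σ.1 : ℝ))⁻¹ *
          ∏ i, ENNReal.ofReal (Dc (σ.2 i) * ρ (σ.2 i) ^ n) := by
    intro n σ
    have hDnn : 0 ≤ ∏ i, Dc (σ.2 i) := Finset.prod_nonneg fun i _ => hDc0 _
    have hfnn : (0 : ℝ) ≤ ((Nat.factorial σ.1 : ℝ))⁻¹ :=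
      inv_nonneg.mpr (Nat.cast_nonneg _)
    rw [hwgtdef]
    rw [← ENNReal.ofReal_mul (mul_nonneg hDnn hfnn)]
    have heq : (∏ i, Dc (σ.2 i)) * ((Nat.factorial σ.1 : ℝ))⁻¹ * (atom σ ^ n)
        = ((Nat.factorial σ.1 : ℝ))⁻¹ * ∏ i, (Dc (σ.2 i) * ρ (σ.2 i) ^ n) := by
      rw [hatomdef]
      show (∏ i, Dc (σ.2 i)) * ((Nat.factorial σ.1 : ℝ))⁻¹ * (∏ i, ρ (σ.2 i)) ^ n = _
      rw [Finset.prod_mul_distrib, ← Finset.prod_pow]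
      ring
    rw [heq, ENNReal.ofReal_mul hfnn, ENNReal.ofReal_prod_of_nonneg
      (fun i _ => mul_nonneg (hDc0 _) (pow_nonneg (hρ0 _).le n))]
  have hofH : ∀ n : ℕ, (∑' k, ENNReal.ofReal (Dc k * ρ k ^ n)) = ENNReal.ofReal (Hh n) := by
    intro n
    rw [hHhdef, ENNReal.ofReal_tsum_of_nonneg
      (fun k => mul_nonneg (hDc0 k) (pow_nonneg (hρ0 k).le n)) (hsum_n n)]
  have hlint : ∀ n : ℕ, (∫⁻ x, ENNReal.ofReal (x ^ n) ∂μ)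
      = ENNReal.ofReal (Real.exp (Hh n - Hh 0)) := by
    intro n
    rw [hμdef, lintegral_sum_measure]
    have hsig : ∀ σ : Σ m : ℕ, (Fin m → ℕ),
        (∫⁻ x, ENNReal.ofReal (x ^ n)
          ∂((ENNReal.ofReal (Real.exp (-(Hh 0))) * wgt σ) • Measure.dirac (atom σ)))
        = ENNReal.ofReal (Real.exp (-(Hh 0))) *
            (ENNReal.ofReal ((Nat.factorial σ.1 : ℝ))⁻¹ *
              ∏ i, ENNReal.ofReal (Dc (σ.2 i) * ρ (σ.2 i) ^ n)) := by
      intro σ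
      rw [lintegral_smul_measure, lintegral_dirac, smul_eq_mul, mul_assoc, hterm n σ]
    rw [tsum_congr hsig, ENNReal.tsum_mul_left, ENNReal.tsum_sigma']
    have hinner : ∀ m : ℕ, (∑' v : Fin m → ℕ, ENNReal.ofReal ((Nat.factorial m : ℝ))⁻¹ *
        ∏ i, ENNReal.ofReal (Dc (v i) * ρ (v i) ^ n))
        = ENNReal.ofReal ((Hh n) ^ m * ((Nat.factorial m : ℝ))⁻¹) := by
      intro m
      rw [ENNReal.tsum_mul_left, tsum_pi_fin_prod (fun k => ENNReal.ofReal (Dc k * ρ k ^ n)) m,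
        hofH n, ← ENNReal.ofReal_pow (hHh0 n),
        ← ENNReal.ofReal_mul (inv_nonneg.mpr (Nat.cast_nonneg _)), mul_comm]
    rw [tsum_congr hinner]
    have houter : (∑' m : ℕ, ENNReal.ofReal ((Hh n) ^ m * ((Nat.factorial m : ℝ))⁻¹))
        = ENNReal.ofReal (Real.exp (Hh n)) := by
      have hsummable : Summable (fun m : ℕ => (Hh n) ^ m * ((Nat.factorial m : ℝ))⁻¹) := by
        have := Real.summable_pow_div_factorial (Hh n)
        simpa [div_eq_mul_inv] using this
      rw [← ENNReal.ofReal_tsum_of_nonneg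
        (fun m => mul_nonneg (pow_nonneg (hHh0 n) m) (inv_nonneg.mpr (Nat.cast_nonneg _)))
        hsummable]
      congr 1
      rw [Real.exp_eq_exp_ℝ, NormedSpace.exp_eq_tsum ℝ]
      exact tsum_congr fun m => by rw [smul_eq_mul]; ring
    rw [houter, ← ENNReal.ofReal_mul (Real.exp_nonneg _), ← Real.exp_add]
    congr 1
    ring
  have hμnull : ∀ S : Set ℝ, MeasurableSet S →
      (∀ σ : Σ m : ℕ, (Fin m → ℕ), atom σ ∉ S) → μ S = 0 := by
    intro S hS hA
    rw [hμdef, Measure.sum_apply _ hS]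
    have hz : ∀ σ : Σ m : ℕ, (Fin m → ℕ),
        ((ENNReal.ofReal (Real.exp (-(Hh 0))) * wgt σ) • Measure.dirac (atom σ)) S = 0 := by
      intro σ
      rw [Measure.smul_apply, Measure.dirac_apply' _ hS,
        Set.indicator_of_notMem (hA σ), smul_zero]
    simp only [hz, tsum_zero]
  have hμuniv : μ Set.univ = 1 := by
    have h0 := hlint 0
    simp only [pow_zero, ENNReal.ofReal_one, lintegral_one, sub_self, Real.exp_zero] at h0
    exact h0
  haveI hfin : IsFiniteMeasure μ := ⟨by rw [hμuniv]; exact ENNReal.one_lt_top⟩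
  refine ⟨fun n => Real.rpow_pos_of_pos (Real.sqrt_pos.mpr (hG0 n)) s,
    ⟨1, fun n => Real.rpow_le_one (Real.sqrt_nonneg _) (Real.sqrt_le_one.mpr (hG1 n)) hs.le⟩,
    μ, hfin, ⟨Set.Icc 0 1, isCompact_Icc, Set.Icc_subset_Ici_self, ?_⟩, ?_⟩
  · exact hμnull _ measurableSet_Icc.compl
      (fun σ hmem => hmem ⟨(hatom_pos σ).le, hatom_le σ⟩)
  · intro n
    have hneg : μ (Set.Iio 0) = 0 :=
      hμnull _ measurableSet_Iio (fun σ => not_lt.mpr (hatom_pos σ).le)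
    have hae : (fun _ : ℝ => (0 : ℝ)) ≤ᵐ[μ] fun x : ℝ => x ^ n := by
      rw [Filter.EventuallyLE, ae_iff]
      refine measure_mono_null (fun x hx => ?_) hneg
      simp only [Set.mem_setOf_eq, not_le] at hx
      by_contra hcon
      simp only [Set.mem_Iio, not_lt] at hcon
      exact absurd (pow_nonneg hcon n) (not_le.mpr hx)
    rw [hγ n, integral_eq_lintegral_of_nonneg_ae hae (continuous_pow n).aestronglyMeasurable,
      hlint n, ENNReal.toReal_ofReal (Real.exp_nonneg _)]

lemma isSubnormalWeight_mul {w v : ℕ → ℝ} (hw : IsSubnormalWeight w)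
    (hv : IsSubnormalWeight v) : IsSubnormalWeight (fun n => w n * v n) := by
  obtain ⟨hwpos, ⟨Cw, hCw⟩, μ, hμfin, ⟨Kw, hKwc, hKw0, hKwnull⟩, hμ⟩ := hw
  obtain ⟨hvpos, ⟨Cv, hCv⟩, ν, hνfin, ⟨Kv, hKvc, hKv0, hKvnull⟩, hν⟩ := hv
  haveI := hμfin; haveI := hνfin
  have hmul : Measurable fun z : ℝ × ℝ => z.1 * z.2 := measurable_fst.mul measurable_snd
  refine ⟨fun n => mul_pos (hwpos n) (hvpos n), ⟨Cw * Cv, fun n => ?_⟩, ?_⟩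
  · exact mul_le_mul (hCw n) (hCv n) (hvpos n).le ((hwpos 0).le.trans (hCw 0))
  refine ⟨(μ.prod ν).map (fun z : ℝ × ℝ => z.1 * z.2), Measure.isFiniteMeasure_map _ _, ?_, ?_⟩
  · refine ⟨(fun z : ℝ × ℝ => z.1 * z.2) '' (Kw ×ˢ Kv),
      (hKwc.prod hKvc).image (continuous_fst.mul continuous_snd), ?_, ?_⟩
    · rintro x ⟨⟨x1, x2⟩, ⟨h1, h2⟩, rfl⟩
      exact mul_nonneg (Set.mem_Ici.mp (hKw0 h1)) (Set.mem_Ici.mp (hKv0 h2))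
    · have hKmeas : MeasurableSet ((fun z : ℝ × ℝ => z.1 * z.2) '' (Kw ×ˢ Kv))ᶜ :=
        (((hKwc.prod hKvc).image (continuous_fst.mul continuous_snd)).isClosed.measurableSet).compl
      rw [Measure.map_apply hmul hKmeas]
      have hsub : (fun z : ℝ × ℝ => z.1 * z.2) ⁻¹' ((fun z : ℝ × ℝ => z.1 * z.2) '' (Kw ×ˢ Kv))ᶜ
          ⊆ (Kw ×ˢ Kv)ᶜ := by
        intro z hz hzmem
        exact hz (Set.mem_image_of_mem _ hzmem)
      refine le_antisymm (le_trans (measure_mono hsub) ?_) zero_le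
      rw [Set.compl_prod_eq_union]
      refine le_trans (measure_union_le _ _) ?_
      rw [Measure.prod_prod, Measure.prod_prod, hKwnull, hKvnull, zero_mul, mul_zero, add_zero]
  · intro n
    have hmom : moments (fun n => w n * v n) n = moments w n * moments v n := by
      simp [moments, mul_pow, Finset.prod_mul_distrib]
    rw [hmom, hμ n, hν n,
      integral_map hmul.aemeasurable (continuous_pow n).aestronglyMeasurable]
    simp_rw [mul_pow]
    exact (integral_prod_mul (μ := μ) (ν := ν) (fun x : ℝ => x ^ n) (fun y : ℝ => y ^ n)).symm


lemma isMIDWeight_mul {w v : ℕ → ℝ} (hw0 : ∀ n, 0 ≤ w n) (hv0 : ∀ n, 0 ≤ v n)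
    (hw : IsMIDWeight w) (hv : IsMIDWeight v) : IsMIDWeight (fun n => w n * v n) := by
  intro s hs
  have h := isSubnormalWeight_mul (hw s hs) (hv s hs)
  have heq : (fun n => (w n * v n) ^ s) = fun n => (w n) ^ s * (v n) ^ s := by
    funext n; exact Real.mul_rpow (hw0 n) (hv0 n)
  rw [heq]; exact h

/-- Theorem 3.1(3b), SW-NE shadow. -/
theorem midSubord_SWNE_shadow (p N D M P : ℝ) (hp : 1 < p)
    (hN : -1 < N) (hN' : N < 1) (hD : -1 < D) (hD' : D < 1)
    (hM : -1 < M) (hM' : M < 1) (hP : -1 < P) (hP' : P < 1)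
    (h : MIDSubord p N D M P) (hM0 : M ≤ 0) (hP0 : P ≤ 0) (hMP : M ≤ P) :
    MIDSubord p N D (-M) (-P) := by
  have hp0 : (0 : ℝ) < p := lt_trans one_pos hp
  have hpow : ∀ n : ℕ, (1 : ℝ) ≤ p ^ n := fun n => one_le_pow₀ hp.le
  have hMPpos : ∀ n : ℕ, 0 < grws p M P n := by
    intro n
    apply Real.sqrt_pos.mpr
    apply div_pos (by nlinarith [hpow n]) (by nlinarith [hpow n])
  have hfac : (fun n => grws p N D n / grws p (-M) (-P) n)
      = fun n => (grws p N D n / grws p M P n) * (grws p M P n / grws p (-M) (-P) n) := by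
    funext n
    rw [div_mul_div_comm, mul_comm (grws p N D n) (grws p M P n),
      mul_div_mul_left _ _ (ne_of_gt (hMPpos n))]
  show IsMIDWeight (fun n => grws p N D n / grws p (-M) (-P) n)
  rw [hfac]
  exact isMIDWeight_mul
    (fun n => div_nonneg (Real.sqrt_nonneg _) (Real.sqrt_nonneg _))
    (fun n => div_nonneg (Real.sqrt_nonneg _) (Real.sqrt_nonneg _))
    h (grws_quot_MID p M P hp hM hP hM0 hP0 hMP)
end
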